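/- arXiv:2302.06189 — 3 statements merged into one kernel-verified Lean document; each statement's English description precedes it below -/
import Mathlib

section
/- Let ψ : X → (−∞,+∞] be defined by ψ(x) = ∫₀ᵀ c²(1 − √(1 − |ẋ(t)|²/c²)) dt if ‖ẋ‖_∞ ≤ c, and ψ(x) = +∞ otherwise. Then ψ is lower semicontinuous with respect to uniform convergence: if x ∈ X and {x_n} is a sequence with ‖ẋ_n‖_∞ ≤ c for all n and x_n → x uniformly on [0,T], then ‖ẋ‖_∞ ≤ c and ψ(x) ≤ liminf_{n→∞} ψ(x_n). -/
/-!
The paths are `T`-periodic, so uniform convergence on `[0,T]` gives pointwise convergence on all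
of `ℝ`, and the limit is again `c`-Lipschitz. For lower semicontinuity, compare `ψ` with its value
on the polygonal interpolation at equally spaced nodes. By Jensen's inequality for the convex
integrand on each cell (and the fundamental theorem of calculus for Lipschitz paths) this value is
at most `ψ`; it involves only finitely many point values, so it passes to the limit along `xₙ`;
and as the mesh tends to `0` the difference quotients of `x` converge a.e. to `ẋ` (Rademacher),
so by dominated convergence the polygonal values of `x` tend to `ψ(x)`.
-/

open Filter Topology Set MeasureTheory Function
open scoped ENNReal NNReal

noncomputable section

namespace LFE

/-- `ℝ³` with the Euclidean norm. -/
abbrev E3 : Type := EuclideanSpace ℝ (Fin 3)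

def toFn (u : E3) : Fin 3 → ℝ := (WithLp.equiv 2 (Fin 3 → ℝ)) u

def fromFn (f : Fin 3 → ℝ) : E3 := (WithLp.equiv 2 (Fin 3 → ℝ)).symm f

/-- Euclidean inner product on `ℝ³`. -/
def dot (u v : E3) : ℝ := ∑ i, toFn u i * toFn v i

/-- Cross product on `ℝ³`. -/
def cross (u v : E3) : E3 :=
  fromFn ![toFn u 1 * toFn v 2 - toFn u 2 * toFn v 1,
           toFn u 2 * toFn v 0 - toFn u 0 * toFn v 2,
           toFn u 0 * toFn v 1 - toFn u 1 * toFn v 0]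

/-- Partial derivative `∂ᵢ Fⱼ` of a vector field on `ℝ³`. -/
def pd (F : E3 → E3) (x : E3) (i j : Fin 3) : ℝ :=
  toFn (fderiv ℝ F x (EuclideanSpace.single i 1)) j

/-- Curl of a vector field on `ℝ³`. -/
def curl (F : E3 → E3) (x : E3) : E3 :=
  fromFn ![pd F x 1 2 - pd F x 2 1, pd F x 2 0 - pd F x 0 2, pd F x 0 1 - pd F x 1 0]

/-- Transpose of the Jacobian of `F` at `x`, applied to the vector `v`. -/
def jacT (F : E3 → E3) (x v : E3) : E3 :=
  fromFn fun i => dot (fderiv ℝ F x (EuclideanSpace.single i 1)) v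

/-- The open set `Ω = {(t,x) : x ≠ rⱼ(t) for all j}`. -/
def Omega (N : ℕ) (r : Fin N → ℝ → E3) : Set (ℝ × E3) := {p | ∀ i, p.2 ≠ r i p.1}

/-- The basic setting: `T`-periodic `C¹` curves of singularities `r i`, moving slower than
light and never colliding, together with `C¹`, `T`-periodic (in time) potentials `V`, `A`
defined on `Ω`. -/
structure Setting (T c : ℝ) (N : ℕ) where
  r : Fin N → ℝ → E3
  V : ℝ → E3 → ℝ
  A : ℝ → E3 → E3
  hT : 0 < T
  hc : 0 < c
  hr_per : ∀ i, Periodic (r i) T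
  hr_C1 : ∀ i, ContDiff ℝ 1 (r i)
  hr_speed : ∀ i, ∃ b, b < c ∧ ∀ t, ‖deriv (r i) t‖ ≤ b
  hr_sep : ∀ i j, i ≠ j → ∀ t ∈ Icc (0:ℝ) T, r i t ≠ r j t
  hV_per : ∀ t x, V (t + T) x = V t x
  hA_per : ∀ t x, A (t + T) x = A t x
  hV_C1 : ContDiffOn ℝ 1 (fun p : ℝ × E3 => V p.1 p.2) (Omega N r)
  hA_C1 : ContDiffOn ℝ 1 (fun p : ℝ × E3 => A p.1 p.2) (Omega N r)

variable {T c : ℝ} {N : ℕ}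

/-- Condition (V): `V < 0` on `Ω` and `V` has a Keplerian blow-up at the singularities. -/
def CondV (S : Setting T c N) : Prop :=
  (∀ p ∈ Omega N S.r, S.V p.1 p.2 < 0) ∧
  ∃ κ > (0:ℝ), ∃ δ > (0:ℝ), ∀ i, ∀ p ∈ Omega N S.r,
    ‖p.2 - S.r i p.1‖ < δ → S.V p.1 p.2 ≤ -κ / ‖p.2 - S.r i p.1‖

/-- Condition (AV1): `|A| ≤ -(κ'/c) V` on `Ω` for some `κ' ∈ (0,1)`. -/
def CondAV1 (S : Setting T c N) : Prop :=
  ∃ κ' : ℝ, 0 < κ' ∧ κ' < 1 ∧ ∀ p ∈ Omega N S.r, ‖S.A p.1 p.2‖ ≤ -(κ' / c) * S.V p.1 p.2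

/-- Condition (AV2): `|V| + |∇ₓV + ∂ₜA| + |curlₓ A| → 0` as `|x| → ∞`, uniformly in `t`. -/
def CondAV2 (S : Setting T c N) : Prop :=
  ∀ ε > (0:ℝ), ∃ R : ℝ, ∀ p ∈ Omega N S.r, R < ‖p.2‖ →
    |S.V p.1 p.2| + ‖gradient (S.V p.1) p.2 + deriv (fun s => S.A s p.2) p.1‖
      + ‖curl (S.A p.1) p.2‖ < ε

/-- `x` is a classical `T`-periodic solution of the Lorentz force equation
`d/dt (ẋ/√(1-|ẋ|²/c²)) = E(t,x) + ẋ × B(t,x)`, with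
`E = -∇ₓV - ∂ₜA` and `B = curlₓ A`, avoiding the singularities. -/
def IsSolution (S : Setting T c N) (x : ℝ → E3) : Prop :=
  Periodic x T ∧ ContDiff ℝ 1 x ∧ (∀ t, (t, x t) ∈ Omega N S.r) ∧
  (∀ t, ‖deriv x t‖ < c) ∧
  ∀ t : ℝ, HasDerivAt (fun s => (Real.sqrt (1 - ‖deriv x s‖ ^ 2 / c ^ 2))⁻¹ • deriv x s)
    (-(gradient (S.V t) (x t)) - deriv (fun s => S.A s (x t)) t
      + cross (deriv x t) (curl (S.A t) (x t))) t

/-- Membership in `X = {x ∈ W^{1,∞}(0,T;ℝ³) : x(0) = x(T)}`, identified with the space of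
`T`-periodic Lipschitz paths. -/
def MemX (T : ℝ) (x : ℝ → E3) : Prop := Periodic x T ∧ ∃ K : ℝ≥0, LipschitzWith K x

/-- `‖x‖_∞` on `[0,T]`. -/
def supN (T : ℝ) (x : ℝ → E3) : ℝ := sSup ((fun t => ‖x t‖) '' Icc 0 T)

/-- `‖ẋ‖_∞` (essential supremum on `[0,T]`). -/
def derN (T : ℝ) (x : ℝ → E3) : ℝ := (eLpNorm (deriv x) ⊤ (volume.restrict (Icc 0 T))).toReal

/-- The norm of `X`: `‖x‖ = ‖x‖_∞ + ‖ẋ‖_∞`. -/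
def Xnorm (T : ℝ) (x : ℝ → E3) : ℝ := supN T x + derN T x

/-- Distance induced by the norm of `X`. -/
def Xdist (T : ℝ) (x y : ℝ → E3) : ℝ := Xnorm T (fun t => x t - y t)

/-- `D_ψ = {x ∈ X : ‖ẋ‖_∞ ≤ c}`, i.e. `x` is `c`-Lipschitz. -/
def MemDpsi (T c : ℝ) (x : ℝ → E3) : Prop := MemX T x ∧ LipschitzWith (Real.toNNReal c) x

/-- The (finite part of the) kinetic functional `ψ`. -/
def psiVal (T c : ℝ) (x : ℝ → E3) : ℝ :=
  ∫ t in (0:ℝ)..T, c ^ 2 * (1 - Real.sqrt (1 - ‖deriv x t‖ ^ 2 / c ^ 2))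

open Classical in
/-- The extended-real-valued functional `ψ`. -/
def psiE (T c : ℝ) (x : ℝ → E3) : EReal :=
  if MemDpsi T c x then (psiVal T c x : EReal) else ⊤

/-- `Λ = {x ∈ X : (t, x(t)) ∈ Ω for all t ∈ [0,T]}`. -/
def MemLambda (T : ℝ) {N : ℕ} (r : Fin N → ℝ → E3) (x : ℝ → E3) : Prop :=
  MemX T x ∧ ∀ t ∈ Icc (0:ℝ) T, (t, x t) ∈ Omega N r

/-- The (finite part of the) potential functional `Φ`. -/
def phiVal (T : ℝ) (V : ℝ → E3 → ℝ) (A : ℝ → E3 → E3) (x : ℝ → E3) : ℝ :=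
  ∫ t in (0:ℝ)..T, (-(V t (x t)) + dot (A t (x t)) (deriv x t))

open Classical in
/-- The extended-real-valued functional `Φ`. -/
def phiE (T : ℝ) {N : ℕ} (r : Fin N → ℝ → E3) (V : ℝ → E3 → ℝ) (A : ℝ → E3 → E3)
    (x : ℝ → E3) : EReal :=
  if MemLambda T r x then (phiVal T V A x : EReal) else ⊤

/-- The action functional `I = ψ + Φ`. -/
def IE (T c : ℝ) {N : ℕ} (r : Fin N → ℝ → E3) (V : ℝ → E3 → ℝ) (A : ℝ → E3 → E3)
    (x : ℝ → E3) : EReal :=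
  psiE T c x + phiE T r V A x

/-- The differential of `Φ` at `x ∈ Λ` in the direction `y`. -/
def dPhi (T : ℝ) (V : ℝ → E3 → ℝ) (A : ℝ → E3 → E3) (x y : ℝ → E3) : ℝ :=
  ∫ t in (0:ℝ)..T,
    (-(dot (gradient (V t) (x t)) (y t)) + dot (A t (x t)) (deriv y t)
      + dot (jacT (A t) (x t) (deriv x t)) (y t))

end LFE

theorem Function.Periodic.tendsto_of_tendsto_Ico {α E : Type*} [TopologicalSpace E]
    {l : Filter α} {f : α → ℝ → E} {g : ℝ → E} {T : ℝ} (hT : 0 < T)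
    (hf : ∀ n, Periodic (f n) T) (hg : Periodic g T)
    (h : ∀ t ∈ Ico 0 T, Tendsto (fun n => f n t) l (𝓝 (g t))) (t : ℝ) :
    Tendsto (fun n => f n t) l (𝓝 (g t)) := by
  have := h (t - ⌊t / T⌋ * T)
    ⟨Int.sub_floor_div_mul_nonneg t hT, Int.sub_floor_div_mul_lt t hT⟩
  simpa only [(hf _).sub_int_mul_eq, hg.sub_int_mul_eq] using this

theorem LipschitzWith.of_tendsto {α β ι : Type*} [PseudoEMetricSpace α] [PseudoEMetricSpace β]
    {l : Filter ι} [l.NeBot] {K : ℝ≥0} {f : ι → α → β} {g : α → β}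
    (hf : ∀ i, LipschitzWith K (f i)) (hlim : ∀ x, Tendsto (fun i => f i x) l (𝓝 (g x))) :
    LipschitzWith K g :=
  (isClosed_setOfPred_lipschitzWith K).mem_of_tendsto (tendsto_pi_nhds.2 hlim)
    (Eventually.of_forall hf)

section Lipschitz

variable {F : Type*} [NormedAddCommGroup F] [NormedSpace ℝ F] {K : ℝ≥0} {f : ℝ → F}

theorem LipschitzWith.intervalIntegrable_deriv [CompleteSpace F] (hf : LipschitzWith K f)
    (a b : ℝ) : IntervalIntegrable (deriv f) volume a b :=
  (intervalIntegrable_const (c := (K : ℝ))).mono_fun (aestronglyMeasurable_deriv f _)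
    (ae_of_all _ fun _ => by simpa using norm_deriv_le_of_lipschitz hf)

theorem LipschitzWith.integral_deriv_eq_sub [FiniteDimensional ℝ F] (hf : LipschitzWith K f)
    (a b : ℝ) : ∫ t in a..b, deriv f t = f b - f a := by
  refine (SeparatingDual.eq_iff_forall_dual_eq (R := ℝ)).2 fun ℓ => ?_
  have hderiv : ∀ᵐ t, t ∈ uIoc a b → deriv (ℓ ∘ f) t = ℓ (deriv f t) := by
    filter_upwards [hf.ae_differentiableAt] with t ht _
    exact (ℓ.hasFDerivAt.comp_hasDerivAt t ht.hasDerivAt).deriv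
  rw [← ℓ.intervalIntegral_comp_comm (hf.intervalIntegrable_deriv a b),
    ← intervalIntegral.integral_congr_ae hderiv, map_sub,
    ((ℓ.lipschitz.comp hf).lipschitzOnWith.absolutelyContinuousOnInterval).integral_deriv_eq_sub]
  rfl

end Lipschitz

theorem HasDerivAt.tendsto_slope_of_le_of_le {α E : Type*} [NormedAddCommGroup E]
    [NormedSpace ℝ E] {f : ℝ → E} {f' : E} {t : ℝ} (hf : HasDerivAt f f' t) {l : Filter α}
    {a b : α → ℝ} (ha : ∀ n, a n ≤ t) (hb : ∀ n, t ≤ b n) (hab : ∀ n, a n < b n)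
    (hlen : Tendsto (fun n => b n - a n) l (𝓝 0)) :
    Tendsto (fun n => slope f (a n) (b n)) l (𝓝 f') := by
  set r : ℝ → E := fun s => f s - f t - (s - t) • f'
  have hr : r =o[𝓝 t] fun s => s - t := hasDerivAt_iff_isLittleO.1 hf
  have hat : Tendsto a l (𝓝 t) := by
    refine tendsto_of_tendsto_of_tendsto_of_le_of_le (g := fun n => t - (b n - a n))
      (by simpa using tendsto_const_nhds.sub hlen) tendsto_const_nhds
      (fun n => by linarith [hb n]) ha
  have hbt : Tendsto b l (𝓝 t) := by
    refine tendsto_of_tendsto_of_tendsto_of_le_of_le (h := fun n => t + (b n - a n))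
      tendsto_const_nhds (by simpa using tendsto_const_nhds.add hlen) hb
      (fun n => by linarith [ha n])
  have hrem : (fun n => r (b n) - r (a n)) =o[l] fun n => b n - a n := by
    refine ((hr.comp_tendsto hbt).trans_isBigO ?_).sub ((hr.comp_tendsto hat).trans_isBigO ?_)
    all_goals refine Asymptotics.isBigO_of_le _ fun n => ?_
    all_goals simp only [comp_apply, Real.norm_eq_abs]
    · rw [abs_of_nonneg (sub_nonneg.2 (hb n)), abs_of_pos (sub_pos.2 (hab n))]
      linarith [ha n]
    · rw [abs_of_nonpos (sub_nonpos.2 (ha n)), abs_of_pos (sub_pos.2 (hab n))]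
      linarith [hb n]
  refine tendsto_sub_nhds_zero_iff.1 (hrem.tendsto_inv_smul_nhds_zero.congr fun n => ?_)
  have hne : b n - a n ≠ 0 := (sub_pos.2 (hab n)).ne'
  have hdiff : r (b n) - r (a n) = f (b n) - f (a n) - (b n - a n) • f' := by
    simp only [r, sub_smul]
    abel
  rw [hdiff, smul_sub, smul_smul, inv_mul_cancel₀ hne, one_smul, slope_def_module]

theorem intervalIntegral.integral_comp_floor_div {E : Type*} [NormedAddCommGroup E]
    [NormedSpace ℝ E] [CompleteSpace E] {h : ℝ} (hh : 0 < h) (g : ℤ → E) (n : ℕ) :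
    ∫ t in 0..n * h, g ⌊t / h⌋ = h • ∑ i ∈ Finset.range n, g i := by
  have hpiece : ∀ i : ℕ,
      EqOn (fun t => g ⌊t / h⌋) (fun _ => g i) (Ioo (i * h) ((i + 1) * h)) := by
    intro i t ht
    simp only
    rw [Int.floor_eq_iff.2]
    push_cast
    constructor
    · rw [le_div_iff₀ hh]; exact ht.1.le
    · rw [div_lt_iff₀ hh]; exact ht.2
  suffices IntervalIntegrable (fun t => g ⌊t / h⌋) volume 0 (n * h) ∧
      ∫ t in 0..n * h, g ⌊t / h⌋ = h • ∑ i ∈ Finset.range n, g i from this.2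
  induction n with
  | zero => simp
  | succ n ih =>
    have hle : (n : ℝ) * h ≤ (n + 1) * h := by nlinarith
    have hint : IntervalIntegrable (fun t => g ⌊t / h⌋) volume (n * h) ((n + 1) * h) :=
      intervalIntegrable_const.congr_uIoo (by rw [uIoo_of_le hle]; exact (hpiece n).symm)
    push_cast
    refine ⟨ih.1.trans hint, ?_⟩
    rw [← integral_add_adjacent_intervals ih.1 hint, ih.2,
      integral_congr_Ioo_of_le hle (hpiece n), intervalIntegral.integral_const,
      Finset.sum_range_succ, smul_add]
    congr 1
    ring_nf

namespace LFE

section Kinetic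

variable {F : Type*} [NormedAddCommGroup F] {c : ℝ}

/-- Beyond the speed of light `Real.sqrt` returns `0`, so the density is `c²` there. -/
def kineticDensity (c : ℝ) (v : F) : ℝ := c ^ 2 * (1 - Real.sqrt (1 - ‖v‖ ^ 2 / c ^ 2))

theorem kineticDensity_nonneg (v : F) : 0 ≤ kineticDensity c v :=
  mul_nonneg (sq_nonneg c) (sub_nonneg.2 (Real.sqrt_le_one.2 (sub_le_self _ (by positivity))))

theorem kineticDensity_le (v : F) : kineticDensity c v ≤ c ^ 2 :=
  mul_le_of_le_one_right (sq_nonneg c) (sub_le_self _ (Real.sqrt_nonneg _))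

theorem continuous_kineticDensity (c : ℝ) : Continuous (kineticDensity c : F → ℝ) := by
  unfold kineticDensity
  fun_prop

theorem convexOn_kineticDensity [NormedSpace ℝ F] (hc : 0 < c) :
    ConvexOn ℝ (Metric.closedBall (0 : F) c) (kineticDensity c) := by
  refine ⟨convex_closedBall _ _, fun u hu v hv θ σ hθ hσ hθσ => ?_⟩
  rw [mem_closedBall_zero_iff] at hu hv
  set q : F → ℝ := fun w => 1 - ‖w‖ ^ 2 / c ^ 2
  have hq_nonneg : ∀ w : F, ‖w‖ ≤ c → 0 ≤ q w := fun w hw => by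
    have : ‖w‖ ^ 2 ≤ c ^ 2 := pow_le_pow_left₀ (norm_nonneg w) hw 2
    simp only [q, sub_nonneg]
    exact div_le_one_of_le₀ this (sq_nonneg c)
  have hnorm_sq : ‖θ • u + σ • v‖ ^ 2 ≤ θ * ‖u‖ ^ 2 + σ * ‖v‖ ^ 2 :=
    (convexOn_univ_norm.pow (fun w _ => norm_nonneg w) 2).2 (mem_univ u) (mem_univ v) hθ hσ hθσ
  have hq : θ * q u + σ * q v ≤ q (θ • u + σ • v) := by
    have : θ * q u + σ * q v = 1 - (θ * ‖u‖ ^ 2 + σ * ‖v‖ ^ 2) / c ^ 2 := by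
      simp only [q]
      field_simp
      linear_combination c ^ 2 * hθσ
    rw [this]
    simp only [q]
    gcongr
  have hsqrt : θ * √(q u) + σ * √(q v) ≤ √(q (θ • u + σ • v)) := by
    have := Real.strictConcaveOn_sqrt.concaveOn.2 (hq_nonneg u hu) (hq_nonneg v hv) hθ hσ hθσ
    simp only [smul_eq_mul] at this
    exact this.trans (Real.sqrt_le_sqrt hq)
  simp only [kineticDensity, smul_eq_mul]
  nlinarith [sq_nonneg c]

theorem intervalIntegrable_kineticDensity_comp {g : ℝ → F} (hg : AEStronglyMeasurable g)
    (a b : ℝ) : IntervalIntegrable (fun t => kineticDensity c (g t)) volume a b :=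
  (intervalIntegrable_const (c := c ^ 2)).mono_fun
    ((continuous_kineticDensity c).comp_aestronglyMeasurable hg.restrict)
    (ae_of_all _ fun t => by
      simpa [abs_of_nonneg (kineticDensity_nonneg (g t))] using kineticDensity_le (g t))

theorem mul_kineticDensity_slope_le_integral [NormedSpace ℝ F] [FiniteDimensional ℝ F]
    (hc : 0 < c) {y : ℝ → F} (hy : LipschitzWith c.toNNReal y) {u v : ℝ} (huv : u < v) :
    (v - u) * kineticDensity c (slope y u v) ≤ ∫ t in u..v, kineticDensity c (deriv y t) := by
  have hspeed : ∀ᵐ t ∂volume.restrict (uIoc u v), deriv y t ∈ Metric.closedBall 0 c :=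
    ae_of_all _ fun t => by
      simpa [Real.coe_toNNReal c hc.le] using norm_deriv_le_of_lipschitz hy (x₀ := t)
  have hjensen := (convexOn_kineticDensity hc).map_set_average_le
    (continuous_kineticDensity c).continuousOn Metric.isClosed_closedBall
    (by simp [uIoc_of_le huv.le, huv]) (by simp [uIoc_of_le huv.le]) hspeed
    (hy.intervalIntegrable_deriv u v).def'
    (intervalIntegrable_kineticDensity_comp (aestronglyMeasurable_deriv y _) u v).def'
  rw [interval_average_eq, interval_average_eq, hy.integral_deriv_eq_sub, ← slope_def_module,
    smul_eq_mul] at hjensen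
  exact (le_inv_mul_iff₀ (sub_pos.2 huv)).1 hjensen

end Kinetic

section Polygonal

variable {F : Type*} [NormedAddCommGroup F] [NormedSpace ℝ F] {c h : ℝ} {y : ℝ → F}

/-- The value of `ψ` on the polygonal interpolation of `y` at the nodes `i * h`, `i ≤ n`. -/
def polygonalKinetic (c : ℝ) (y : ℝ → F) (h : ℝ) (n : ℕ) : ℝ :=
  ∑ i ∈ Finset.range n, h * kineticDensity c (slope y (i * h) ((i + 1) * h))

theorem polygonalKinetic_eq_integral (hh : 0 < h) (n : ℕ) :
    polygonalKinetic c y h n =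
      ∫ t in 0..n * h, kineticDensity c (slope y (⌊t / h⌋ * h) ((⌊t / h⌋ + 1) * h)) := by
  rw [intervalIntegral.integral_comp_floor_div hh
    (fun k : ℤ => kineticDensity c (slope y (k * h) ((k + 1) * h))), polygonalKinetic,
    smul_eq_mul, Finset.mul_sum]
  push_cast
  rfl

theorem tendsto_polygonalKinetic_of_tendsto {ι : Type*} {l : Filter ι} {ys : ι → ℝ → F}
    (hlim : ∀ t, Tendsto (fun i => ys i t) l (𝓝 (y t))) (h : ℝ) (n : ℕ) :
    Tendsto (fun i => polygonalKinetic c (ys i) h n) l (𝓝 (polygonalKinetic c y h n)) := by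
  refine tendsto_finsetSum _ fun k _ => Tendsto.const_mul h ?_
  refine ((continuous_kineticDensity c).tendsto _).comp ?_
  simp only [slope_def_module]
  exact ((hlim _).sub (hlim _)).const_smul _

theorem tendsto_polygonalKinetic {T : ℝ} {K : ℝ≥0} [FiniteDimensional ℝ F] (hT : 0 < T)
    (hy : LipschitzWith K y) :
    Tendsto (fun m : ℕ => polygonalKinetic c y (T / (m + 1)) (m + 1)) atTop
      (𝓝 (∫ t in 0..T, kineticDensity c (deriv y t))) := by
  set h : ℕ → ℝ := fun m => T / (m + 1)
  have hh : ∀ m, 0 < h m := fun m => by positivity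
  have hmesh : Tendsto h atTop (𝓝 0) :=
    ((tendsto_const_div_atTop_nhds_zero_nat T).comp (tendsto_add_atTop_nat 1)).congr
      fun m => by simp [h]
  have hrepr : ∀ m : ℕ, ∫ t in 0..T, kineticDensity c (slope y (⌊t / h m⌋ * h m)
      ((⌊t / h m⌋ + 1) * h m)) = polygonalKinetic c y (h m) (m + 1) := fun m => by
    rw [polygonalKinetic_eq_integral (hh m)]
    congr 1
    simp only [h]
    push_cast
    field_simp
  refine Tendsto.congr hrepr ?_
  refine intervalIntegral.tendsto_integral_filter_of_dominated_convergence (fun _ => c ^ 2)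
    (Eventually.of_forall fun m => ?_) (Eventually.of_forall fun m => ae_of_all _ fun t _ => ?_)
    intervalIntegrable_const ?_
  · exact ((measurable_of_countable
      fun k : ℤ => kineticDensity c (slope y (k * h m) ((k + 1) * h m))).comp
      (measurable_id.div_const (h m)).floor).aestronglyMeasurable
  · rw [Real.norm_of_nonneg (kineticDensity_nonneg _)]
    exact kineticDensity_le _
  · filter_upwards [hy.ae_differentiableAt] with t ht _
    have hlow : ∀ m, ⌊t / h m⌋ * h m ≤ t := fun m => by
      linarith [Int.sub_floor_div_mul_nonneg t (hh m)]
    have hup : ∀ m, t ≤ (⌊t / h m⌋ + 1) * h m := fun m => by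
      linarith [Int.sub_floor_div_mul_lt t (hh m), add_one_mul (⌊t / h m⌋ : ℝ) (h m)]
    refine ((continuous_kineticDensity c).tendsto _).comp
      (ht.hasDerivAt.tendsto_slope_of_le_of_le hlow hup (fun m => by nlinarith [hh m]) ?_)
    simpa only [add_one_mul, add_sub_cancel_left] using hmesh

theorem polygonalKinetic_le_integral [FiniteDimensional ℝ F] (hc : 0 < c)
    (hy : LipschitzWith c.toNNReal y) (hh : 0 < h) (n : ℕ) :
    polygonalKinetic c y h n ≤ ∫ t in 0..n * h, kineticDensity c (deriv y t) := by
  have hsplit := intervalIntegral.sum_integral_adjacent_intervals (a := fun k : ℕ => k * h)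
    (n := n) fun k _ =>
      intervalIntegrable_kineticDensity_comp (c := c) (aestronglyMeasurable_deriv y _) _ _
  simp only [Nat.cast_zero, zero_mul, Nat.cast_add_one] at hsplit
  rw [← hsplit]
  refine Finset.sum_le_sum fun i _ => ?_
  have := mul_kineticDensity_slope_le_integral hc hy (u := i * h) (v := (i + 1) * h)
    (by nlinarith)
  rwa [show (i + 1) * h - i * h = h by ring] at this

end Polygonal

theorem integral_kineticDensity_le_liminf {F : Type*} [NormedAddCommGroup F] [NormedSpace ℝ F]
    [FiniteDimensional ℝ F] {T c : ℝ} (hT : 0 < T) (hc : 0 < c) {y : ℝ → F}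
    {ys : ℕ → ℝ → F} (hys : ∀ n, LipschitzWith c.toNNReal (ys n))
    (hlim : ∀ t, Tendsto (fun n => ys n t) atTop (𝓝 (y t))) :
    ∫ t in 0..T, kineticDensity c (deriv y t) ≤
      liminf (fun n => ∫ t in 0..T, kineticDensity c (deriv (ys n) t)) atTop := by
  have hbdd : IsCoboundedUnder (· ≥ ·) atTop
      fun n => ∫ t in 0..T, kineticDensity c (deriv (ys n) t) := by
    refine IsBoundedUnder.isCoboundedUnder_ge (isBoundedUnder_of ⟨c ^ 2 * T, fun n => ?_⟩)
    calc ∫ t in 0..T, kineticDensity c (deriv (ys n) t) ≤ ∫ _ in 0..T, c ^ 2 :=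
          intervalIntegral.integral_mono_on hT.le
            (intervalIntegrable_kineticDensity_comp (aestronglyMeasurable_deriv _ _) _ _)
            intervalIntegrable_const fun t _ => kineticDensity_le _
      _ = c ^ 2 * T := by simp [mul_comm]
  refine le_of_tendsto' (tendsto_polygonalKinetic hT (LipschitzWith.of_tendsto hys hlim))
    fun m => ?_
  have hpoly := tendsto_polygonalKinetic_of_tendsto (c := c) hlim (T / (m + 1)) (m + 1)
  rw [← hpoly.liminf_eq]
  refine liminf_le_liminf (Eventually.of_forall fun n => ?_) hpoly.isBoundedUnder_ge hbdd
  have hnodes : ((m + 1 : ℕ) : ℝ) * (T / (m + 1)) = T := by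
    push_cast
    field_simp
  simpa only [hnodes] using
    polygonalKinetic_le_integral hc (hys n) (h := T / (m + 1)) (by positivity) (m + 1)

end LFE

/-- **Lemma.** The kinetic functional `ψ` is lower semicontinuous with respect to uniform
convergence: if `x ∈ X`, `‖ẋₙ‖_∞ ≤ c` for all `n` and `xₙ → x` uniformly on `[0,T]`, then
`‖ẋ‖_∞ ≤ c` and `ψ(x) ≤ liminf ψ(xₙ)`. -/
theorem psi_lsc_uniform_convergence
    (T c : ℝ) (hT : 0 < T) (hc : 0 < c)
    (x : ℝ → LFE.E3) (hx : LFE.MemX T x)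
    (xn : ℕ → ℝ → LFE.E3) (hxn : ∀ n, LFE.MemDpsi T c (xn n))
    (hconv : TendstoUniformlyOn (fun n t => xn n t) x Filter.atTop (Set.Icc 0 T)) :
    LipschitzWith (Real.toNNReal c) x ∧
      LFE.psiVal T c x ≤ Filter.liminf (fun n => LFE.psiVal T c (xn n)) Filter.atTop := by
  have hlim : ∀ t, Tendsto (fun n => xn n t) atTop (𝓝 (x t)) :=
    Periodic.tendsto_of_tendsto_Ico hT (fun n => (hxn n).1.1) hx.1
      fun t ht => hconv.tendsto_at (Ico_subset_Icc_self ht)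
  exact ⟨LipschitzWith.of_tendsto (fun n => (hxn n).2) hlim,
    LFE.integral_kineticDensity_le_liminf hT hc (fun n => (hxn n).2) hlim⟩
end
end

section
/- Assume conditions (V), (AV1) and (AV2) hold. Let {x_n} ⊂ D_I be a Palais–Smale sequence for I at a level c₀ > 0, i.e. I(x_n) → c₀ and dΦ(x_n)[z − x_n] + ψ(z) − ψ(x_n) ≥ −ε_n‖z − x_n‖ for all z ∈ X and some ε_n → 0⁺. Then the sequence {x_n} is bounded in L^∞(0,T;ℝ³) (and hence, since ‖ẋ_n‖_∞ ≤ c, bounded in X). -/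
open Filter Topology Set MeasureTheory Function
open scoped ENNReal NNReal

noncomputable section

/-!
If a Palais–Smale path `xₙ` stayed outside a large ball during a whole period, test the
Palais–Smale inequality against the constant path `xₙ(0)`. With `y = xₙ(0) - xₙ`, which vanishes
at `0` and `T`, integrating `A · ẏ` by parts turns `dΦ(xₙ)[y]` into
`∫ (-(∇ₓV + ∂ₜA) + ẋₙ × curlₓ A) · y`, small by (AV2) because `|y| ≤ cT`; by (AV1) and (AV2)
`Φ(xₙ)` is small as well. Hence `ψ(xₙ) + Φ(xₙ)` would be small, against `I(xₙ) → c₀ > 0`. So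
from some index on every `xₙ` meets a fixed ball, and being `c`-Lipschitz it stays within `cT`
of it.
-/

open scoped InnerProductSpace

theorem ContDiffOn.absolutelyContinuousOnInterval_comp {E F : Type*} [NormedAddCommGroup E]
    [NormedSpace ℝ E] [NormedAddCommGroup F] [NormedSpace ℝ F] {f : E → F} {U : Set E}
    (hU : IsOpen U) (hf : ContDiffOn ℝ 1 f U) {γ : ℝ → E} {K : ℝ≥0} {a b : ℝ}
    (hγ : LipschitzOnWith K γ (uIcc a b)) (hγU : MapsTo γ (uIcc a b) U) :
    AbsolutelyContinuousOnInterval (f ∘ γ) a b := by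
  have hloc : LocallyLipschitzOn U f := fun p hp => by
    obtain ⟨L, t, ht, hL⟩ := (hf.contDiffAt (hU.mem_nhds hp)).exists_lipschitzOnWith
    exact ⟨L, t, nhdsWithin_le_nhds ht, hL⟩
  obtain ⟨L, hL⟩ := (hloc.mono (mapsTo_iff_image_subset.1 hγU)).exists_lipschitzOnWith_of_compact
    (isCompact_uIcc.image_of_continuousOn hγ.continuousOn)
  exact (hL.comp hγ (mapsTo_image γ _)).absolutelyContinuousOnInterval

theorem hasDerivAt_comp_graph {F G : Type*} [NormedAddCommGroup F] [NormedSpace ℝ F]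
    [NormedAddCommGroup G] [NormedSpace ℝ G] {A : ℝ → F → G} {x : ℝ → F} {t : ℝ}
    (hA : DifferentiableAt ℝ (fun p : ℝ × F => A p.1 p.2) (t, x t))
    (hx : DifferentiableAt ℝ x t) :
    HasDerivAt (fun s => A s (x s))
      (deriv (fun s => A s (x t)) t + fderiv ℝ (A t) (x t) (deriv x t)) t := by
  set L := fderiv ℝ (fun p : ℝ × F => A p.1 p.2) (t, x t)
  have hA' : HasFDerivAt (fun p : ℝ × F => A p.1 p.2) L (t, x t) := hA.hasFDerivAt
  have ht : HasDerivAt (fun s => A s (x t)) (L (1, 0)) t :=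
    (hA'.comp_hasDerivAt t ((hasDerivAt_id t).prodMk (hasDerivAt_const t (x t))) :)
  have hy : HasFDerivAt (A t) (L.comp (ContinuousLinearMap.inr ℝ ℝ F)) (x t) :=
    hA'.comp (x t) (hasFDerivAt_prodMk_right t (x t))
  refine (hA'.comp_hasDerivAt t ((hasDerivAt_id t).prodMk hx.hasDerivAt) :).congr_deriv ?_
  rw [ht.deriv, hy.fderiv, ContinuousLinearMap.comp_apply, ← map_add]
  simp

theorem LipschitzWith.norm_sub_le_of_mem_Icc {E : Type*} [SeminormedAddCommGroup E] {f : ℝ → E}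
    {K : ℝ≥0} (hf : LipschitzWith K f) {a b s t : ℝ} (hs : s ∈ Icc a b) (ht : t ∈ Icc a b) :
    ‖f s - f t‖ ≤ K * (b - a) := by
  rw [← dist_eq_norm]
  exact (hf.dist_le_mul s t).trans (mul_le_mul_of_nonneg_left (Real.dist_le_of_mem_Icc hs ht) K.2)

theorem exists_forall_norm_le_of_eventually {E : Type*} [SeminormedAddCommGroup E]
    {x : ℕ → ℝ → E} {K : ℝ≥0} (hx : ∀ n, LipschitzWith K (x n)) {a b R : ℝ} (hab : a ≤ b)
    (h : ∀ᶠ n in atTop, ∃ t ∈ Icc a b, ‖x n t‖ ≤ R) :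
    ∃ M, ∀ n, ∀ t ∈ Icc a b, ‖x n t‖ ≤ M := by
  have hdist : ∀ n, ∀ s ∈ Icc a b, ∀ t ∈ Icc a b, ‖x n t‖ ≤ ‖x n s‖ + K * (b - a) :=
    fun n s hs t ht => (norm_le_norm_add_norm_sub' _ _).trans
      (by gcongr; exact (hx n).norm_sub_le_of_mem_Icc ht hs)
  obtain ⟨B, hB⟩ : BddAbove (range fun n => ‖x n a‖) := by
    refine IsBoundedUnder.bddAbove_range_of_cofinite ?_
    rw [Nat.cofinite_eq_atTop]
    exact ⟨R + K * (b - a), h.mono fun n ⟨t, ht, hRt⟩ =>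
      (hdist n t ht a ⟨le_rfl, hab⟩).trans (by linarith)⟩
  exact ⟨B + K * (b - a), fun n t ht =>
    (hdist n a ⟨le_rfl, hab⟩ t ht).trans (by linarith [hB ⟨n, rfl⟩])⟩

namespace LFE

lemma dot_eq_inner (u v : E3) : dot u v = ⟪u, v⟫_ℝ := by
  simp [dot, toFn, PiLp.inner_apply, RCLike.inner_apply, WithLp.equiv_apply, mul_comm]

lemma norm_cross_le (u v : E3) : ‖cross u v‖ ≤ ‖u‖ * ‖v‖ := by
  refine (pow_le_pow_iff_left₀ (norm_nonneg _) (by positivity) two_ne_zero).mp ?_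
  simp only [mul_pow, EuclideanSpace.norm_sq_eq, Real.norm_eq_abs, sq_abs, Fin.sum_univ_three,
    cross, toFn, fromFn, WithLp.equiv_apply, WithLp.equiv_symm_apply,
    Matrix.cons_val_zero, Matrix.cons_val_one, Matrix.cons_val_two, Matrix.head_cons,
    Matrix.tail_cons]
  nlinarith [sq_nonneg (u 0 * v 0 + u 1 * v 1 + u 2 * v 2)]

lemma jacT_eq_fderiv_add_cross (F : E3 → E3) (x v : E3) :
    jacT F x v = fderiv ℝ F x v + cross v (curl F x) := by
  set L := fderiv ℝ F x
  have hv : v = ∑ i, v i • EuclideanSpace.single i (1 : ℝ) := by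
    ext j; simp [Pi.single_apply]
  have hL : ∀ j, L v j = ∑ i, v i * L (EuclideanSpace.single i 1) j := by
    intro j; conv_lhs => rw [hv]
    simp [map_sum]
  ext j
  fin_cases j <;>
  · simp only [jacT, cross, curl, pd, dot, fromFn, toFn, Fin.sum_univ_three, hL,
      WithLp.equiv_apply, WithLp.equiv_symm_apply, PiLp.toLp_apply, PiLp.add_apply,
      Matrix.cons_val_zero, Matrix.cons_val_one, Matrix.head_cons, Matrix.cons_val_two,
      Matrix.tail_cons, Fin.zero_eta, Fin.mk_one, Fin.reduceFinMk]
    ring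

variable {T c : ℝ} {N : ℕ}

lemma Setting.isOpen_omega (S : Setting T c N) : IsOpen (Omega N S.r) := by
  have h : Omega N S.r = ⋂ i, {p : ℝ × E3 | p.2 ≠ S.r i p.1} := by
    ext p; simp [Omega]
  rw [h]
  exact isOpen_iInter_of_finite fun i =>
    isOpen_ne_fun continuous_snd ((S.hr_C1 i).continuous.comp continuous_fst)

lemma Xnorm_le {x : ℝ → E3} {M K : ℝ} (hT : 0 ≤ T) (hx : ∀ t ∈ Icc 0 T, ‖x t‖ ≤ M)
    (hx' : ∀ t, ‖deriv x t‖ ≤ K) : Xnorm T x ≤ M + K := by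
  refine add_le_add (Real.sSup_le ?_ ((norm_nonneg _).trans (hx 0 ⟨le_rfl, hT⟩))) ?_
  · rintro _ ⟨t, ht, rfl⟩
    exact hx t ht
  · rw [derN, eLpNorm_exponent_top]
    exact ENNReal.toReal_le_of_le_ofReal ((norm_nonneg _).trans (hx' 0))
      (eLpNormEssSup_le_of_ae_bound (.of_forall hx'))

lemma Xdist_const_le {x : ℝ → E3} {K : ℝ≥0} (hx : LipschitzWith K x) (hT : 0 ≤ T) :
    Xdist T (fun _ => x 0) x ≤ K * T + K := by
  refine Xnorm_le hT (fun t ht => ?_) fun t => ?_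
  · simpa using hx.norm_sub_le_of_mem_Icc ⟨le_rfl, hT⟩ ht
  · rw [deriv_const_sub, norm_neg]
    exact norm_deriv_le_of_lipschitz hx

lemma psiVal_const (a : E3) : psiVal T c (fun _ => a) = 0 := by
  simp [psiVal]

lemma memDpsi_const (a : E3) : MemDpsi T c (fun _ => a) :=
  ⟨⟨fun _ => rfl, 0, LipschitzWith.const' a⟩, LipschitzWith.const' a⟩

lemma dPhi_integrand_sub_deriv_eq {V : ℝ → E3 → ℝ} {A : ℝ → E3 → E3} {x : ℝ → E3} {t : ℝ}
    (hA : DifferentiableAt ℝ (fun p : ℝ × E3 => A p.1 p.2) (t, x t))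
    (hx : DifferentiableAt ℝ x t) (a : E3) :
    -(dot (gradient (V t) (x t)) (a - x t)) + dot (A t (x t)) (deriv (fun s => a - x s) t)
        + dot (jacT (A t) (x t) (deriv x t)) (a - x t)
        - deriv (fun s => ⟪A s (x s), a - x s⟫_ℝ) t
      = -⟪gradient (V t) (x t) + deriv (fun s => A s (x t)) t, a - x t⟫_ℝ
        + ⟪cross (deriv x t) (curl (A t) (x t)), a - x t⟫_ℝ := by
  rw [((hasDerivAt_comp_graph hA hx).inner ℝ (hx.hasDerivAt.const_sub a)).deriv,
    deriv_const_sub, jacT_eq_fderiv_add_cross]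
  simp only [dot_eq_inner, inner_add_left, inner_neg_right]
  ring

lemma dPhi_integrand_le {V : ℝ → E3 → ℝ} {A : ℝ → E3 → E3} {x : ℝ → E3} {t : ℝ}
    (hA : DifferentiableAt ℝ (fun p : ℝ × E3 => A p.1 p.2) (t, x t))
    (hx : DifferentiableAt ℝ x t) {a : E3} {K ε r : ℝ} (hv : ‖deriv x t‖ ≤ K)
    (hr : ‖a - x t‖ ≤ r) (hE : ‖gradient (V t) (x t) + deriv (fun s => A s (x t)) t‖ ≤ ε)
    (hB : ‖curl (A t) (x t)‖ ≤ ε) :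
    -(dot (gradient (V t) (x t)) (a - x t)) + dot (A t (x t)) (deriv (fun s => a - x s) t)
        + dot (jacT (A t) (x t) (deriv x t)) (a - x t)
      ≤ ε * (1 + K) * r + deriv (fun s => ⟪A s (x s), a - x s⟫_ℝ) t := by
  have hε : 0 ≤ ε := (norm_nonneg _).trans hB
  have hK : 0 ≤ K := (norm_nonneg _).trans hv
  have hxB : ‖cross (deriv x t) (curl (A t) (x t))‖ ≤ K * ε :=
    (norm_cross_le _ _).trans (mul_le_mul hv hB (norm_nonneg _) hK)
  rw [← sub_le_iff_le_add, dPhi_integrand_sub_deriv_eq hA hx]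
  calc -⟪gradient (V t) (x t) + deriv (fun s => A s (x t)) t, a - x t⟫_ℝ
        + ⟪cross (deriv x t) (curl (A t) (x t)), a - x t⟫_ℝ
      ≤ ‖gradient (V t) (x t) + deriv (fun s => A s (x t)) t‖ * ‖a - x t‖
        + ‖cross (deriv x t) (curl (A t) (x t))‖ * ‖a - x t‖ :=
      add_le_add ((neg_le_abs _).trans (abs_real_inner_le_norm _ _)) (real_inner_le_norm _ _)
    _ ≤ ε * r + K * ε * r := by gcongr
    _ = ε * (1 + K) * r := by ring

lemma dPhi_const_sub_le {V : ℝ → E3 → ℝ} {A : ℝ → E3 → E3} {U : Set (ℝ × E3)} (hU : IsOpen U)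
    (hA : ContDiffOn ℝ 1 (fun p : ℝ × E3 => A p.1 p.2) U) {x : ℝ → E3} {K : ℝ≥0}
    (hx : LipschitzWith K x) (hT : 0 ≤ T) (hxT : x T = x 0)
    (hxU : ∀ t ∈ Icc 0 T, (t, x t) ∈ U) {ε : ℝ}
    (hE : ∀ t ∈ Icc 0 T, ‖gradient (V t) (x t) + deriv (fun s => A s (x t)) t‖ ≤ ε)
    (hB : ∀ t ∈ Icc 0 T, ‖curl (A t) (x t)‖ ≤ ε) :
    dPhi T V A x (fun t => x 0 - x t) ≤ ε * (1 + K) * (K * T) * T := by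
  set h : ℝ → ℝ := fun s => ⟪A s (x s), x 0 - x s⟫_ℝ
  have hac : AbsolutelyContinuousOnInterval h 0 T :=
    (hA.inner ℝ (contDiffOn_const.sub contDiffOn_snd)).absolutelyContinuousOnInterval_comp hU
      (γ := fun s => (s, x s)) (LipschitzWith.id.prodMk hx).lipschitzOnWith
      (by rw [uIcc_of_le hT]; exact hxU)
  have hint : ∫ t in 0..T, deriv h t = 0 := by
    simp [hac.integral_deriv_eq_sub, h, hxT]
  set G : ℝ → ℝ := fun t => -(dot (gradient (V t) (x t)) (x 0 - x t))
    + dot (A t (x t)) (deriv (fun s => x 0 - x s) t)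
    + dot (jacT (A t) (x t) (deriv x t)) (x 0 - x t)
  have hG : ∀ᵐ t ∂volume.restrict (Icc 0 T), G t ≤ ε * (1 + K) * (K * T) + deriv h t := by
    filter_upwards [ae_restrict_of_ae hx.ae_differentiableAt, ae_restrict_mem measurableSet_Icc]
      with t hxt ht
    exact dPhi_integrand_le
      ((hA.differentiableOn one_ne_zero).differentiableAt (hU.mem_nhds (hxU t ht))) hxt
      (norm_deriv_le_of_lipschitz hx) (by simpa using hx.norm_sub_le_of_mem_Icc ⟨le_rfl, hT⟩ ht)
      (hE t ht) (hB t ht)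
  by_cases hGi : IntervalIntegrable G volume 0 T
  · calc dPhi T V A x (fun t => x 0 - x t) = ∫ t in 0..T, G t := rfl
      _ ≤ ∫ t in 0..T, (ε * (1 + K) * (K * T) + deriv h t) :=
        intervalIntegral.integral_mono_ae_restrict hT hGi
          (intervalIntegrable_const.add hac.intervalIntegrable_deriv) hG
      _ = ε * (1 + K) * (K * T) * T := by
        rw [intervalIntegral.integral_add intervalIntegrable_const hac.intervalIntegrable_deriv,
          hint, intervalIntegral.integral_const]
        simp [mul_comm]
  · -- the integral of a non-integrable function is `0`
    have hε : 0 ≤ ε := (norm_nonneg _).trans (hB 0 ⟨le_rfl, hT⟩)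
    show ∫ t in 0..T, G t ≤ _
    rw [intervalIntegral.integral_undef hGi]
    positivity

lemma phiVal_le {V : ℝ → E3 → ℝ} {A : ℝ → E3 → E3} {x : ℝ → E3} {κ ε : ℝ} (hT : 0 ≤ T)
    (hc : 0 < c) (hκ : 0 ≤ κ) (hA : ∀ t ∈ Icc 0 T, ‖A t (x t)‖ ≤ -(κ / c) * V t (x t))
    (hx : ∀ t, ‖deriv x t‖ ≤ c) (hV : ∀ t ∈ Icc 0 T, |V t (x t)| ≤ ε) :
    phiVal T V A x ≤ (1 + κ) * ε * T := by
  have hpt : ∀ t ∈ uIoc 0 T, ‖-V t (x t) + dot (A t (x t)) (deriv x t)‖ ≤ (1 + κ) * ε := by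
    intro t ht
    rw [uIoc_of_le hT] at ht
    have ht : t ∈ Icc 0 T := Ioc_subset_Icc_self ht
    have hAx : ‖A t (x t)‖ * ‖deriv x t‖ ≤ κ * ε :=
      calc ‖A t (x t)‖ * ‖deriv x t‖ ≤ (κ / c * |V t (x t)|) * c := by
            gcongr
            · exact (hA t ht).trans (by rw [neg_mul, ← mul_neg]; gcongr; exact neg_le_abs _)
            · exact hx t
        _ = κ * |V t (x t)| := by field_simp
        _ ≤ κ * ε := by gcongr; exact hV t ht
    calc ‖-V t (x t) + dot (A t (x t)) (deriv x t)‖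
        ≤ |V t (x t)| + ‖A t (x t)‖ * ‖deriv x t‖ := by
          rw [dot_eq_inner, Real.norm_eq_abs, ← abs_neg (V t (x t))]
          exact (abs_add_le _ _).trans (add_le_add le_rfl (abs_real_inner_le_norm _ _))
      _ ≤ (1 + κ) * ε := by linarith [hV t ht]
  have := (intervalIntegral.norm_integral_le_of_norm_le_const hpt).trans' (le_abs_self _)
  rwa [sub_zero, abs_of_nonneg hT] at this

lemma psiVal_add_phiVal_le_of_far (S : Setting T c N) {κ : ℝ} (hκ : 0 ≤ κ)
    (hAV1 : ∀ p ∈ Omega N S.r, ‖S.A p.1 p.2‖ ≤ -(κ / c) * S.V p.1 p.2) {x : ℝ → E3}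
    (hxD : MemDpsi T c x) (hxΛ : MemLambda T S.r x) {ε δ : ℝ}
    (hfar : ∀ t ∈ Icc 0 T, |S.V t (x t)|
      + ‖gradient (S.V t) (x t) + deriv (fun s => S.A s (x t)) t‖ + ‖curl (S.A t) (x t)‖ < δ)
    (hε : 0 ≤ ε)
    (hPS : -(ε * Xdist T (fun _ => x 0) x) ≤ dPhi T S.V S.A x (fun t => x 0 - x t)
      + psiVal T c (fun _ => x 0) - psiVal T c x) :
    psiVal T c x + phiVal T S.V S.A x
      ≤ ε * (c * T + c) + δ * ((1 + c) * (c * T) * T + (1 + κ) * T) := by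
  have hT := S.hT.le
  have hK : (c.toNNReal : ℝ) = c := Real.coe_toNNReal c S.hc.le
  have hlip := hxD.2
  have hxT : x T = x 0 := by simpa using hxD.1.1 0
  have hd := dPhi_const_sub_le S.isOpen_omega S.hA_C1 hlip hT hxT hxΛ.2
    (fun t ht => ((le_add_of_nonneg_left (abs_nonneg _)).trans
      (le_add_of_nonneg_right (norm_nonneg _))).trans (hfar t ht).le)
    (fun t ht => (le_add_of_nonneg_left (add_nonneg (abs_nonneg _) (norm_nonneg _))).trans
      (hfar t ht).le)
  have hφ := phiVal_le hT S.hc hκ (fun t ht => hAV1 _ (hxΛ.2 t ht))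
    (fun t => hK ▸ norm_deriv_le_of_lipschitz hlip)
    (fun t ht => ((le_add_of_nonneg_right (norm_nonneg _)).trans
      (le_add_of_nonneg_right (norm_nonneg _))).trans (hfar t ht).le)
  have hX := mul_le_mul_of_nonneg_left (Xdist_const_le hlip hT) hε
  rw [hK] at hd hX
  rw [psiVal_const] at hPS
  linarith

end LFE

theorem palais_smale_sequences_bounded_general
    {T c : ℝ} {N : ℕ} (S : LFE.Setting T c N)
    (hAV1 : LFE.CondAV1 S) (hAV2 : LFE.CondAV2 S)
    (c₀ : ℝ) (hc₀ : 0 < c₀)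
    (x : ℕ → ℝ → LFE.E3)
    (hx : ∀ n, LFE.MemDpsi T c (x n) ∧ LFE.MemLambda T S.r (x n))
    (hI : Filter.Tendsto (fun n => LFE.psiVal T c (x n) + LFE.phiVal T S.V S.A (x n))
      Filter.atTop (nhds c₀))
    (ε : ℕ → ℝ) (hε0 : ∀ n, 0 < ε n) (hε : Filter.Tendsto ε Filter.atTop (nhds 0))
    (hPS : ∀ n, ∀ z : ℝ → LFE.E3, LFE.MemDpsi T c z →
      -(ε n * LFE.Xdist T z (x n)) ≤
        LFE.dPhi T S.V S.A (x n) (fun t => z t - x n t)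
          + LFE.psiVal T c z - LFE.psiVal T c (x n)) :
    (∃ M : ℝ, ∀ n, ∀ t ∈ Set.Icc (0:ℝ) T, ‖x n t‖ ≤ M) ∧
    ∃ M' : ℝ, ∀ n, LFE.Xnorm T (x n) ≤ M' := by
  obtain ⟨κ, hκ, -, hA⟩ := hAV1
  obtain ⟨δ, hδ, hδC⟩ := exists_pos_mul_lt (by positivity : 0 < c₀ / 4)
    ((1 + c) * (c * T) * T + (1 + κ) * T)
  obtain ⟨R, hR⟩ := hAV2 δ hδ
  have hεC : Tendsto (fun n => ε n * (c * T + c)) atTop (𝓝 0) := by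
    simpa using hε.mul_const (c * T + c)
  have hnear : ∀ᶠ n in atTop, ∃ t ∈ Icc 0 T, ‖x n t‖ ≤ R := by
    filter_upwards [hI.eventually_const_lt (half_lt_self hc₀),
      hεC.eventually_lt_const (by positivity : 0 < c₀ / 4)] with n hIn hεn
    by_contra! hfar
    have := LFE.psiVal_add_phiVal_le_of_far S hκ.le hA (hx n).1 (hx n).2
      (fun t ht => hR _ ((hx n).2.2 t ht) (hfar t ht)) (hε0 n).le
      (hPS n _ (LFE.memDpsi_const (x n 0)))
    linarith
  obtain ⟨M, hM⟩ := exists_forall_norm_le_of_eventually (fun n => (hx n).1.2) S.hT.le hnear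
  exact ⟨⟨M, hM⟩, M + c.toNNReal, fun n =>
    LFE.Xnorm_le S.hT.le (hM n) fun t => norm_deriv_le_of_lipschitz (hx n).1.2⟩

/-- **Lemma (boundedness of Palais–Smale sequences).** Under (V), (AV1), (AV2), every
Palais–Smale sequence `{xₙ} ⊂ D_I` for `I` at a level `c₀ > 0` is bounded in `L^∞(0,T;ℝ³)`
and hence bounded in `X`. -/
theorem palais_smale_sequences_bounded
    {T c : ℝ} {N : ℕ} (S : LFE.Setting T c N)
    (hV : LFE.CondV S) (hAV1 : LFE.CondAV1 S) (hAV2 : LFE.CondAV2 S)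
    (c₀ : ℝ) (hc₀ : 0 < c₀)
    (x : ℕ → ℝ → LFE.E3)
    (hx : ∀ n, LFE.MemDpsi T c (x n) ∧ LFE.MemLambda T S.r (x n))
    (hI : Filter.Tendsto (fun n => LFE.psiVal T c (x n) + LFE.phiVal T S.V S.A (x n))
      Filter.atTop (nhds c₀))
    (ε : ℕ → ℝ) (hε0 : ∀ n, 0 < ε n) (hε : Filter.Tendsto ε Filter.atTop (nhds 0))
    (hPS : ∀ n, ∀ z : ℝ → LFE.E3, LFE.MemDpsi T c z →
      -(ε n * LFE.Xdist T z (x n)) ≤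
        LFE.dPhi T S.V S.A (x n) (fun t => z t - x n t)
          + LFE.psiVal T c z - LFE.psiVal T c (x n)) :
    (∃ M : ℝ, ∀ n, ∀ t ∈ Set.Icc (0:ℝ) T, ‖x n t‖ ≤ M) ∧
    ∃ M' : ℝ, ∀ n, LFE.Xnorm T (x n) ≤ M' :=
  palais_smale_sequences_bounded_general S hAV1 hAV2 c₀ hc₀ x hx hI ε hε0 hε hPS
end
end

section
/- Let r : ℝ → ℝ³ be a T-periodic C¹ function with ‖ṙ‖_∞ < c, and let (t,x) ∈ ℝ × ℝ³ with x ≠ r(s) for all s. Then there exists a unique t_r ∈ ℝ (the retarded time) such that t_r = t − |x − r(t_r)|/c. Moreover, the map (t,x) ↦ t_r(t,x) satisfies t_r(t+T, x) = t_r(t,x) + T for all such (t,x). -/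
open Function

noncomputable section

/-- `ℝ³` with the Euclidean norm. -/
abbrev E3 : Type := EuclideanSpace ℝ (Fin 3)

open NNReal

/-
The retarded-time equation says that `t_r` is a fixed point of `s ↦ t - ‖x - r s‖ / c`. If `r` is
`K`-Lipschitz (for a `C¹` curve, `K` bounds the speed), this map is `K / c`-Lipschitz, hence a
contraction when `K < c`, and Banach's fixed point theorem gives existence and uniqueness. If `r`
has period `T`, shifting a retarded time for `t` by `T` gives one for `t + T`, so by uniqueness it
is the retarded time for `t + T`.
-/

section

variable {E : Type*} [SeminormedAddCommGroup E]

def IsRetardedTime (c : ℝ) (r : ℝ → E) (t : ℝ) (x : E) (tr : ℝ) : Prop :=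
  tr = t - ‖x - r tr‖ / c

theorem LipschitzWith.sub_norm_sub_div {K : ℝ≥0} {r : ℝ → E} (hr : LipschitzWith K r)
    (c : ℝ≥0) (t : ℝ) (x : E) : LipschitzWith (K / c) fun s => t - ‖x - r s‖ / c := by
  refine LipschitzWith.of_dist_le_mul fun a b => ?_
  have hnorm : |‖x - r b‖ - ‖x - r a‖| ≤ dist (r a) (r b) := by
    simpa [dist_eq_norm] using abs_norm_sub_norm_le (x - r b) (x - r a)
  calc dist (t - ‖x - r a‖ / c) (t - ‖x - r b‖ / c) = |‖x - r b‖ - ‖x - r a‖| / c := by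
        rw [Real.dist_eq, ← abs_of_nonneg c.coe_nonneg, ← abs_div, abs_of_nonneg c.coe_nonneg]
        ring_nf
    _ ≤ K * dist a b / c := by gcongr; exact hnorm.trans (hr.dist_le_mul a b)
    _ = (K / c : ℝ≥0) * dist a b := by push_cast; ring

theorem LipschitzWith.existsUnique_isRetardedTime {K c : ℝ≥0} {r : ℝ → E}
    (hr : LipschitzWith K r) (hKc : K < c) (t : ℝ) (x : E) :
    ∃! tr, IsRetardedTime c r t x tr := by
  have hcontr : ContractingWith (K / c) fun s => t - ‖x - r s‖ / c :=
    ⟨(div_lt_one (pos_of_gt hKc)).2 hKc, hr.sub_norm_sub_div c t x⟩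
  exact ⟨hcontr.fixedPoint, hcontr.fixedPoint_isFixedPt.symm,
    fun _ h => hcontr.fixedPoint_unique h.symm⟩

theorem IsRetardedTime.add_period {c T t tr : ℝ} {r : ℝ → E} {x : E} (hr : Periodic r T)
    (h : IsRetardedTime c r t x tr) : IsRetardedTime c r (t + T) x (tr + T) := by
  unfold IsRetardedTime at *
  rw [hr tr]
  linarith

end

theorem retarded_time_exists_unique_general
    (T c : ℝ) (hc : 0 < c)
    (r : ℝ → E3) (hper : Periodic r T) (hC1 : ContDiff ℝ 1 r)
    (hspeed : ∃ b, b < c ∧ ∀ s, ‖deriv r s‖ ≤ b) :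
    (∀ (t : ℝ) (x : E3), (∀ s, x ≠ r s) →
      ∃! tr : ℝ, tr = t - ‖x - r tr‖ / c) ∧
    ∀ (t : ℝ) (x : E3), (∀ s, x ≠ r s) → ∀ tr tr' : ℝ,
      tr = t - ‖x - r tr‖ / c → tr' = (t + T) - ‖x - r tr'‖ / c → tr' = tr + T := by
  obtain ⟨b, hbc, hb⟩ := hspeed
  have hb0 : 0 ≤ b := (norm_nonneg _).trans (hb 0)
  have hlip : LipschitzWith ⟨b, hb0⟩ r :=
    lipschitzWith_of_nnnorm_deriv_le (hC1.differentiable one_ne_zero) fun s => hb s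
  have hunique : ∀ t x, ∃! tr, IsRetardedTime c r t x tr :=
    hlip.existsUnique_isRetardedTime (c := ⟨c, hc.le⟩) hbc
  exact ⟨fun t x _ => hunique t x, fun t x _ _ _ h h' =>
    (hunique (t + T) x).unique h' (IsRetardedTime.add_period hper h)⟩

/-- **Lemma (retarded time).** If `r` is a `T`-periodic `C¹` curve with `‖ṙ‖_∞ < c` and
`x ≠ r(s)` for all `s`, then for every `t` there is a unique retarded time `t_r` with
`t_r = t - |x - r(t_r)|/c`; moreover `t_r(t + T, x) = t_r(t, x) + T`. -/
theorem retarded_time_exists_unique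
    (T c : ℝ) (hT : 0 < T) (hc : 0 < c)
    (r : ℝ → E3) (hper : Periodic r T) (hC1 : ContDiff ℝ 1 r)
    (hspeed : ∃ b, b < c ∧ ∀ s, ‖deriv r s‖ ≤ b) :
    (∀ (t : ℝ) (x : E3), (∀ s, x ≠ r s) →
      ∃! tr : ℝ, tr = t - ‖x - r tr‖ / c) ∧
    ∀ (t : ℝ) (x : E3), (∀ s, x ≠ r s) → ∀ tr tr' : ℝ,
      tr = t - ‖x - r tr‖ / c → tr' = (t + T) - ‖x - r tr'‖ / c → tr' = tr + T :=
  retarded_time_exists_unique_general T c hc r hper hC1 hspeed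
end
end
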